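/- Fix ε ∈ (0, 1), let r = r(n) be a sequence of natural numbers with 2 ≤ r(n) and r(n) = o(n^{1/3}), and let p = p(n) = (1−ε)·p_c(n, r(n)). Let Y_n be the number of families A ⊆ [n]^(r(n)) with |A| = binom(n−1,r(n)−1) + 1 and d(A) = binom(n−1,r(n)−1) that induce an independent set in K_{p(n)}(n, r(n)). Then E[Y_n] → ∞ as n → ∞. -/

import Mathlib

open Finset Filter Real Asymptotics

noncomputable section

open Classical in
/-- Probability of the event `E` under the product Bernoulli(`p`) measure on `ι → Bool`
(each coordinate `true`, i.e. "retained", independently with probability `p`). -/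
def bprob {ι : Type*} [Fintype ι] (p : ℝ) (E : Set (ι → Bool)) : ℝ :=
  ∑ ω : ι → Bool, if ω ∈ E then ∏ e : ι, (if ω e then p else 1 - p) else 0

open Classical in
/-- Expectation of `X` under the product Bernoulli(`p`) measure on `ι → Bool`. -/
def bexpect {ι : Type*} [Fintype ι] (p : ℝ) (X : (ι → Bool) → ℝ) : ℝ :=
  ∑ ω : ι → Bool, (∏ e : ι, (if ω e then p else 1 - p)) * X ω

/-- The threshold function `p_c(n,r) = ((r+1) log n - r log r) / C(n-1, r-1)`. -/
def pc (n r : ℕ) : ℝ :=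
  (((r : ℝ) + 1) * Real.log n - (r : ℝ) * Real.log r) / ((n - 1).choose (r - 1))

/-- `A` is a family of `r`-element subsets of `[n]`. -/
def isRFamily (n r : ℕ) (A : Finset (Finset (Fin n))) : Prop :=
  ∀ S ∈ A, S.card = r

/-- `A` induces an independent set in the random subgraph of the Kneser graph determined by
the edge sample `ω` (`ω e = true` meaning the edge `e` was retained): no retained edge, i.e.
pair of disjoint sets, has both endpoints in `A`. -/
def inducesIndep (n : ℕ) (ω : Sym2 (Finset (Fin n)) → Bool)
    (A : Finset (Finset (Fin n))) : Prop :=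
  ∀ S ∈ A, ∀ T ∈ A, S ≠ T → Disjoint S T → ω s(S, T) = false

open Classical in
/-- The independence number of the random subgraph `K_p(n,r)` determined by the
edge sample `ω`: the largest size of a family of `r`-sets inducing an independent set. -/
def kneserAlpha (n r : ℕ) (ω : Sym2 (Finset (Fin n)) → Bool) : ℕ :=
  Finset.sup
    (Finset.univ.filter fun A : Finset (Finset (Fin n)) =>
      isRFamily n r A ∧ inducesIndep n ω A)
    Finset.card

/-- The star centred at `x`: all `r`-element subsets of `[n]` containing `x`. -/
def kstar (n r : ℕ) (x : Fin n) : Finset (Finset (Fin n)) :=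
  Finset.univ.filter fun S => S.card = r ∧ x ∈ S

/-- `A_x`: the subfamily of members of `A` containing `x`. -/
def subAt (n : ℕ) (A : Finset (Finset (Fin n))) (x : Fin n) : Finset (Finset (Fin n)) :=
  A.filter fun S => x ∈ S

/-- The maximum degree `d(A) = max_x |A_x|`. -/
def maxDeg (n : ℕ) (A : Finset (Finset (Fin n))) : ℕ :=
  Finset.univ.sup fun x : Fin n => (subAt n A x).card

open Classical in
/-- `e(A)`: the number of unordered pairs `{S, T} ⊆ A` with `S ∩ T = ∅`, i.e. the number of
edges of the Kneser graph induced by `A`. -/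
def eCount (n : ℕ) (A : Finset (Finset (Fin n))) : ℕ :=
  (A.sym2.filter fun e => ¬ e.IsDiag ∧ ∀ S ∈ e, ∀ T ∈ e, S ≠ T → Disjoint S T).card

open Classical in
/-- `Y`: the number of families of `r`-sets of size `C(n-1,r-1) + 1` with maximum degree
`C(n-1,r-1)` (i.e. containing a full star) inducing an independent set in the sample `ω`. -/
def Ycount (n r : ℕ) (ω : Sym2 (Finset (Fin n)) → Bool) : ℕ :=
  (Finset.univ.filter fun A : Finset (Finset (Fin n)) =>
    isRFamily n r A ∧ A.card = (n - 1).choose (r - 1) + 1 ∧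
      maxDeg n A = (n - 1).choose (r - 1) ∧ inducesIndep n ω A).card

open Classical in
/-- `X_i`: the number of families of `r`-sets of size `C(n-1,r-1)` with maximum degree
`C(n-1,r-1) - i` inducing an independent set in the sample `ω`. -/
def Xcount (n r i : ℕ) (ω : Sym2 (Finset (Fin n)) → Bool) : ℕ :=
  (Finset.univ.filter fun A : Finset (Finset (Fin n)) =>
    isRFamily n r A ∧ A.card = (n - 1).choose (r - 1) ∧
      maxDeg n A = (n - 1).choose (r - 1) - i ∧ inducesIndep n ω A).card

/-!
For a point `x` and an `r`-set `T ∌ x`, the family `S_x ∪ {T}` has `C(n-1,r-1) + 1` members and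
maximum degree `C(n-1,r-1)`, and distinct pairs `(x, T)` give distinct families (for `n ≥ r + 2`).
It is independent as soon as the at most `C(n-1,r-1)` Kneser edges between `T` and `S_x` are
absent, so `E[Y] ≥ n C(n-1,r) (1-p)^C(n-1,r-1)`.

As `p → 0`, `log (1-p) ≥ -p/(1-p)` gives `(1-p)^C(n-1,r-1) ≥ (r^r / n^(r+1))^(1-ε/2)` because
`p C(n-1,r-1) = (1-ε)((r+1) log n - r log r)`, while `C(n-1,r) ≥ (n/2r)^r`. The product is
`n^(ε/2) ((n/r)^(ε/2) / 2)^r ≥ n^(ε/2)` as soon as `(n/r)^ε ≥ 4`, which `r ≤ n^(1/3)` ensures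
for large `n`.
-/

open Classical in
lemma sum_bprob_le_bexpect {ι κ : Type*} [Fintype ι] {p : ℝ} (hp0 : 0 ≤ p) (hp1 : p ≤ 1)
    (s : Finset κ) (E : κ → Set (ι → Bool)) {X : (ι → Bool) → ℝ}
    (hX : ∀ ω, (#{q ∈ s | ω ∈ E q} : ℝ) ≤ X ω) :
    ∑ q ∈ s, bprob p (E q) ≤ bexpect p X := by
  unfold bprob bexpect
  rw [Finset.sum_comm]
  refine sum_le_sum fun ω _ => ?_
  rw [← sum_filter, sum_const, nsmul_eq_mul, mul_comm]
  refine mul_le_mul_of_nonneg_left (hX ω) (prod_nonneg fun e _ => ?_)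
  split_ifs <;> linarith

lemma bprob_forall_eq_false {ι : Type*} [Fintype ι] (p : ℝ) (B : Finset ι) :
    bprob p {ω : ι → Bool | ∀ e ∈ B, ω e = false} = (1 - p) ^ #B := by
  classical
  unfold bprob
  calc _ = ∑ ω : ι → Bool, ∏ e, (if ω e then (if e ∈ B then 0 else p) else 1 - p) := by
        refine sum_congr rfl fun ω _ => ?_
        split_ifs with h
        · refine prod_congr rfl fun e _ => ?_
          by_cases he : e ∈ B <;> simp [he, h e]
        · obtain ⟨e, he, hωe⟩ : ∃ e ∈ B, ω e = true := by simpa using h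
          exact (prod_eq_zero (mem_univ e) (by simp [he, hωe])).symm
    _ = ∏ e, ∑ b : Bool, (if b then (if e ∈ B then 0 else p) else 1 - p) :=
        (Fintype.prod_sum fun e (b : Bool) => if b then (if e ∈ B then 0 else p) else 1 - p).symm
    _ = ∏ e, (if e ∈ B then 1 - p else 1) :=
        prod_congr rfl fun e _ => by by_cases he : e ∈ B <;> simp [he]
    _ = (1 - p) ^ #B := by rw [prod_ite_mem, univ_inter, prod_const]

lemma two_le_choose {n k : ℕ} (hk : 0 < k) (hkn : k < n) : 2 ≤ n.choose k := by
  obtain ⟨m, rfl⟩ : ∃ m, n = m + 1 := ⟨n - 1, by omega⟩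
  obtain ⟨j, rfl⟩ : ∃ j, k = j + 1 := ⟨k - 1, by omega⟩
  rw [Nat.choose_succ_succ']
  have := Nat.choose_pos (show j ≤ m by omega)
  have := Nat.choose_pos (show j + 1 ≤ m by omega)
  omega

section Kneser

variable {n r : ℕ}

lemma mem_kstar {x : Fin n} {S : Finset (Fin n)} : S ∈ kstar n r x ↔ S.card = r ∧ x ∈ S := by
  simp [kstar]

lemma card_kstar (hr : 1 ≤ r) (x : Fin n) : #(kstar n r x) = (n - 1).choose (r - 1) := by
  have h : kstar n r x = {S ∈ (univ : Finset (Fin n)).powersetCard r | {x} ⊆ S} := by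
    ext S; simp [mem_kstar]
  rw [h, card_filter_powersetCard_subset _ _ _ (subset_univ _) (by simpa using hr)]
  simp

lemma two_le_card_filter_notMem_kstar (hr : 2 ≤ r) (hn : r + 2 ≤ n) {x y : Fin n} (hxy : x ≠ y) :
    2 ≤ #{S ∈ kstar n r y | x ∉ S} := by
  have h : {S ∈ kstar n r y | x ∉ S} = {S ∈ (univ.erase x).powersetCard r | {y} ⊆ S} := by
    ext S
    simp only [mem_filter, mem_kstar, mem_powersetCard, singleton_subset_iff, subset_erase,
      subset_univ, true_and]
    tauto
  rw [h, card_filter_powersetCard_subset _ _ _ (by simpa using hxy.symm)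
    (by rw [card_singleton]; omega)]
  simp only [card_singleton, card_erase_of_mem (mem_univ x), card_univ, Fintype.card_fin]
  exact two_le_choose (by omega) (by omega)

lemma maxDeg_le_of_isRFamily (hr : 1 ≤ r) {A : Finset (Finset (Fin n))} (hA : isRFamily n r A) :
    maxDeg n A ≤ (n - 1).choose (r - 1) :=
  Finset.sup_le fun y _ => (card_kstar hr y).symm ▸ card_le_card fun S hS => by
    rw [subAt, mem_filter] at hS
    exact mem_kstar.mpr ⟨hA S hS.1, hS.2⟩

variable {x : Fin n} {T : Finset (Fin n)}

lemma isRFamily_insert_kstar (hT : #T = r) : isRFamily n r (insert T (kstar n r x)) := by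
  intro S hS
  rcases mem_insert.mp hS with rfl | hS
  · exact hT
  · exact (mem_kstar.mp hS).1

lemma card_insert_kstar (hr : 1 ≤ r) (hxT : x ∉ T) :
    #(insert T (kstar n r x)) = (n - 1).choose (r - 1) + 1 := by
  rw [card_insert_of_notMem fun h => hxT (mem_kstar.mp h).2, card_kstar hr]

lemma maxDeg_insert_kstar (hr : 1 ≤ r) (hT : #T = r) :
    maxDeg n (insert T (kstar n r x)) = (n - 1).choose (r - 1) := by
  refine (maxDeg_le_of_isRFamily hr (isRFamily_insert_kstar hT)).antisymm ?_
  calc (n - 1).choose (r - 1) = #(kstar n r x) := (card_kstar hr x).symm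
    _ ≤ #(subAt n (insert T (kstar n r x)) x) := card_le_card fun S hS =>
        mem_filter.mpr ⟨mem_insert_of_mem hS, (mem_kstar.mp hS).2⟩
    _ ≤ maxDeg n (insert T (kstar n r x)) :=
        le_sup (f := fun y => #(subAt n (insert T (kstar n r x)) y)) (mem_univ x)

lemma inducesIndep_insert_kstar {ω : Sym2 (Finset (Fin n)) → Bool}
    (h : ∀ S ∈ kstar n r x, ω s(S, T) = false) : inducesIndep n ω (insert T (kstar n r x)) := by
  intro S hS S' hS' hne hdisj
  rcases mem_insert.mp hS with hST | hSx <;> rcases mem_insert.mp hS' with hS'T | hS'x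
  · exact absurd (hST.trans hS'T.symm) hne
  · rw [hST, Sym2.eq_swap]; exact h S' hS'x
  · rw [hS'T]; exact h S hSx
  · exact absurd (disjoint_left.mp hdisj (mem_kstar.mp hSx).2 (mem_kstar.mp hS'x).2) (by simp)

lemma filter_notMem_insert_kstar (hxT : x ∉ T) : {S ∈ insert T (kstar n r x) | x ∉ S} = {T} := by
  ext S
  simp only [mem_filter, mem_insert, mem_singleton, mem_kstar]
  constructor
  · rintro ⟨rfl | ⟨_, hxS⟩, hxS'⟩
    · rfl
    · exact absurd hxS hxS'
  · rintro rfl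
    exact ⟨Or.inl rfl, hxT⟩

lemma eq_and_eq_of_insert_kstar_eq (hr : 2 ≤ r) (hn : r + 2 ≤ n) {y : Fin n} {U : Finset (Fin n)}
    (hxT : x ∉ T) (hyU : y ∉ U) (h : insert T (kstar n r x) = insert U (kstar n r y)) :
    x = y ∧ T = U := by
  obtain rfl : x = y := by
    by_contra hxy
    have hsub : {S ∈ kstar n r y | x ∉ S} ⊆ {T} := by
      rw [← filter_notMem_insert_kstar hxT, h]
      exact filter_subset_filter _ (subset_insert _ _)
    have := (two_le_card_filter_notMem_kstar hr hn hxy).trans (card_le_card hsub)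
    simp at this
  have hT := filter_notMem_insert_kstar (r := r) hxT
  rw [h, filter_notMem_insert_kstar hyU] at hT
  exact ⟨rfl, (singleton_injective hT).symm⟩

end Kneser

def avoidingPairs (n r : ℕ) : Finset ((_ : Fin n) × Finset (Fin n)) :=
  univ.sigma fun x => (univ.erase x).powersetCard r

lemma card_avoidingPairs (n r : ℕ) : #(avoidingPairs n r) = n * (n - 1).choose r := by
  simp [avoidingPairs, card_sigma, card_powersetCard, card_erase_of_mem]

lemma mem_avoidingPairs {n r : ℕ} {q : (_ : Fin n) × Finset (Fin n)} :
    q ∈ avoidingPairs n r ↔ q.1 ∉ q.2 ∧ #q.2 = r := by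
  simp [avoidingPairs, subset_erase]

open Classical in
lemma card_filter_avoidingPairs_le_Ycount {n r : ℕ} (hr : 2 ≤ r) (hn : r + 2 ≤ n)
    (ω : Sym2 (Finset (Fin n)) → Bool) :
    #{q ∈ avoidingPairs n r | ∀ S ∈ kstar n r q.1, ω s(S, q.2) = false} ≤ Ycount n r ω := by
  refine card_le_card_of_injOn (fun q => insert q.2 (kstar n r q.1)) ?_ ?_
  · intro q hq
    simp only [coe_filter, Set.mem_ofPred_eq, mem_avoidingPairs] at hq
    obtain ⟨⟨hxT, hT⟩, hω⟩ := hq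
    simp only [coe_filter, mem_univ, true_and, Set.mem_ofPred_eq]
    exact ⟨isRFamily_insert_kstar hT, card_insert_kstar (by omega) hxT,
      maxDeg_insert_kstar (by omega) hT, inducesIndep_insert_kstar hω⟩
  · rintro ⟨x, T⟩ hq ⟨y, U⟩ hq' h
    simp only [coe_filter, Set.mem_ofPred_eq, mem_avoidingPairs] at hq hq'
    obtain ⟨rfl, rfl⟩ := eq_and_eq_of_insert_kstar_eq hr hn hq.1.1 hq'.1.1 h
    rfl

lemma mul_choose_mul_one_sub_pow_le_bexpect_Ycount {n r : ℕ} {p : ℝ} (hp0 : 0 ≤ p) (hp1 : p ≤ 1)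
    (hr : 2 ≤ r) (hn : r + 2 ≤ n) :
    n * (n - 1).choose r * (1 - p) ^ (n - 1).choose (r - 1) ≤
      bexpect p fun ω : Sym2 (Finset (Fin n)) → Bool => (Ycount n r ω : ℝ) := by
  set edges : (_ : Fin n) × Finset (Fin n) → Finset (Sym2 (Finset (Fin n))) :=
    fun q => (kstar n r q.1).image fun S => s(S, q.2)
  calc (n : ℝ) * (n - 1).choose r * (1 - p) ^ (n - 1).choose (r - 1)
      = ∑ _q ∈ avoidingPairs n r, (1 - p) ^ (n - 1).choose (r - 1) := by
        rw [sum_const, card_avoidingPairs, nsmul_eq_mul]; push_cast; ring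
    _ ≤ ∑ q ∈ avoidingPairs n r, (1 - p) ^ #(edges q) :=
        sum_le_sum fun q _ => pow_le_pow_of_le_one (by linarith) (by linarith)
          (card_image_le.trans (card_kstar (by omega) q.1).le)
    _ = ∑ q ∈ avoidingPairs n r, bprob p {ω | ∀ e ∈ edges q, ω e = false} := by
        simp only [bprob_forall_eq_false]
    _ ≤ _ := by
        refine sum_bprob_le_bexpect hp0 hp1 _ _ fun ω => ?_
        simp only [edges, Set.mem_ofPred_eq, forall_mem_image]
        exact_mod_cast card_filter_avoidingPairs_le_Ycount hr hn ω

section Threshold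

variable {n r : ℕ}

lemma log_threshold_nonneg (hrn : r ≤ n) : 0 ≤ ((r : ℝ) + 1) * log n - r * log r := by
  have hlogr : log r ≤ log n := by
    rcases Nat.eq_zero_or_pos r with rfl | hr
    · simpa using Real.log_natCast_nonneg n
    · exact Real.log_le_log (by positivity) (by exact_mod_cast hrn)
  nlinarith [Real.log_natCast_nonneg n,
    mul_nonneg (Nat.cast_nonneg r : (0 : ℝ) ≤ r) (sub_nonneg.mpr hlogr)]

lemma pc_nonneg (hrn : r ≤ n) : 0 ≤ pc n r :=
  div_nonneg (log_threshold_nonneg hrn) (Nat.cast_nonneg _)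

lemma sub_add_one_le_choose_pred (hr : 2 ≤ r) (hrn : r ≤ n) :
    n - r + 1 ≤ (n - 1).choose (r - 1) := by
  rw [← Nat.choose_symm (by omega : r - 1 ≤ n - 1), show n - 1 - (r - 1) = n - r by omega]
  calc n - r + 1 = (n - r + 1).choose (n - r) := (Nat.choose_succ_self_right _).symm
    _ ≤ (n - 1).choose (n - r) := Nat.choose_le_choose _ (by omega)

lemma pc_le (hr : 2 ≤ r) (hrn : 2 * r ≤ n) : pc n r ≤ 4 * (r * log n / n) := by
  have hn : (0 : ℝ) < n := by exact_mod_cast (show 0 < n by omega)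
  have hm : (n : ℝ) / 2 ≤ (n - 1).choose (r - 1) := by
    have h := sub_add_one_le_choose_pred hr (by omega : r ≤ n)
    have h' : (2 * r : ℝ) ≤ n := by exact_mod_cast hrn
    rw [← Nat.cast_le (α := ℝ), Nat.cast_add, Nat.cast_sub (by omega)] at h
    push_cast at h
    linarith
  have hlogn := Real.log_natCast_nonneg n
  have hlogr := Real.log_natCast_nonneg r
  have hr' : (1 : ℝ) ≤ r := by exact_mod_cast (show 1 ≤ r by omega)
  unfold pc
  rw [div_le_iff₀ ((half_pos hn).trans_le hm)]
  calc ((r : ℝ) + 1) * log n - r * log r ≤ 4 * (r * log n / n) * (n / 2) := by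
        field_simp
        nlinarith [mul_nonneg (Nat.cast_nonneg r : (0 : ℝ) ≤ r) hlogr]
    _ ≤ _ := mul_le_mul_of_nonneg_left hm (by positivity)

lemma div_pow_le_choose_pred (hr : 0 < r) (hrn : 2 * r ≤ n) :
    ((n : ℝ) / (2 * r)) ^ r ≤ (n - 1).choose r := by
  have hr' : (0 : ℝ) < r := by exact_mod_cast hr
  have hsub : ((n - 1 + 1 - r : ℕ) : ℝ) = n - r := by
    rw [show n - 1 + 1 - r = n - r by omega, Nat.cast_sub (by omega)]
  have hrn' : (2 * r : ℝ) ≤ n := by exact_mod_cast hrn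
  calc ((n : ℝ) / (2 * r)) ^ r ≤ ((n - r : ℝ) / r) ^ r :=
        pow_le_pow_left₀ (by positivity)
          (by rw [div_le_div_iff₀ (by positivity) hr']; nlinarith) r
    _ = ((n - r : ℝ)) ^ r / (r : ℝ) ^ r := div_pow _ _ _
    _ ≤ ((n - r : ℝ)) ^ r / r.factorial :=
        div_le_div_of_nonneg_left (pow_nonneg (by linarith) _)
          (by exact_mod_cast Nat.factorial_pos r) (by exact_mod_cast Nat.factorial_le_pow r)
    _ ≤ (n - 1).choose r := by
        have := Nat.pow_le_choose (α := ℝ) r (n - 1)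
        rwa [hsub] at this

end Threshold

lemma rpow_le_mul_choose_mul_one_sub_pow {ε p : ℝ} {n r m : ℕ} (hr : 0 < r) (hrn : 2 * r ≤ n)
    (hnr : 2 * log 2 ≤ ε * (log n - log r)) (hp0 : 0 ≤ p) (hp1 : p < 1) (hpε : p ≤ ε / 2)
    (hmp : m * p = (1 - ε) * ((r + 1) * log n - r * log r)) :
    (n : ℝ) ^ (ε / 2) ≤ n * (n - 1).choose r * (1 - p) ^ m := by
  set L := ((r : ℝ) + 1) * log n - r * log r
  have hL : 0 ≤ L := log_threshold_nonneg (by omega)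
  have hn : (0 : ℝ) < n := by exact_mod_cast (show 0 < n by omega)
  have hr' : (0 : ℝ) < r := by exact_mod_cast hr
  have h1p : 0 < 1 - p := by linarith
  have hC : (0 : ℝ) < (n - 1).choose r := by exact_mod_cast Nat.choose_pos (by omega)
  have hlogC : r * (log n - log 2 - log r) ≤ log ((n - 1).choose r) := by
    have h := Real.log_le_log (by positivity) (div_pow_le_choose_pred hr hrn)
    rwa [Real.log_pow, Real.log_div hn.ne' (by positivity), Real.log_mul two_ne_zero hr'.ne',
      ← sub_sub] at h
  have hlog1p : -((1 - ε / 2) * L) ≤ m * log (1 - p) := by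
    have hfac : 1 - ε ≤ (1 - ε / 2) * (1 - p) := by nlinarith
    calc -((1 - ε / 2) * L) ≤ -(m * p / (1 - p)) := by
          rw [hmp, neg_le_neg_iff, div_le_iff₀ h1p]
          nlinarith
      _ = m * (1 - (1 - p)⁻¹) := by field_simp [h1p.ne']; ring
      _ ≤ m * log (1 - p) := mul_le_mul_of_nonneg_left
          (Real.one_sub_inv_le_log_of_pos h1p) (Nat.cast_nonneg m)
  rw [← Real.log_le_log_iff (by positivity) (by positivity),
    Real.log_rpow hn, Real.log_mul (by positivity) (pow_pos (by linarith) m).ne',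
    Real.log_mul hn.ne' hC.ne', Real.log_pow]
  nlinarith [mul_nonneg hr'.le (sub_nonneg.mpr hnr)]

lemma choose_pred_mul_pc {n r : ℕ} (hrn : r ≤ n) :
    ((n - 1).choose (r - 1) : ℝ) * pc n r = ((r : ℝ) + 1) * log n - r * log r := by
  have hm : ((n - 1).choose (r - 1) : ℝ) ≠ 0 := by
    exact_mod_cast (Nat.choose_pos (by omega)).ne'
  rw [pc, mul_div_cancel₀ _ hm]

lemma two_mul_add_two_le_of_pow_three_le {r n : ℕ} (hr : 2 ≤ r) (h : r ^ 3 ≤ n) :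
    2 * r + 2 ≤ n := by
  have : 2 * 2 * r ≤ r ^ 3 := by
    rw [pow_succ, pow_two]
    exact Nat.mul_le_mul_right r (Nat.mul_le_mul hr hr)
  omega

lemma two_thirds_mul_log_le_log_sub_log_of_pow_three_le {r n : ℕ} (hr : 0 < r) (h : r ^ 3 ≤ n) :
    2 / 3 * log n ≤ log n - log r := by
  have hlog := Real.log_le_log (by positivity) (Nat.cast_le (α := ℝ).mpr h)
  rw [Nat.cast_pow, Real.log_pow, Nat.cast_ofNat] at hlog
  linarith

section Asymptotics

open Topology

variable {r : ℕ → ℕ}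

lemma eventually_pow_three_le
    (hro : (fun n => (r n : ℝ)) =o[atTop] fun n : ℕ => (n : ℝ) ^ ((1 : ℝ) / 3)) :
    ∀ᶠ n in atTop, r n ^ 3 ≤ n := by
  filter_upwards [hro.bound one_pos] with n hn
  rw [one_mul, Real.norm_natCast, Real.norm_of_nonneg (by positivity)] at hn
  have hcube : ((n : ℝ) ^ ((1 : ℝ) / 3)) ^ 3 = n := by
    rw [← Real.rpow_natCast, ← Real.rpow_mul (Nat.cast_nonneg _)]
    norm_num
  have h := pow_le_pow_left₀ (Nat.cast_nonneg _) hn 3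
  rw [hcube] at h
  exact_mod_cast h

lemma tendsto_pc_zero (hr : ∀ n, 2 ≤ r n)
    (hro : (fun n => (r n : ℝ)) =o[atTop] fun n : ℕ => (n : ℝ) ^ ((1 : ℝ) / 3)) :
    Tendsto (fun n => pc n (r n)) atTop (𝓝 0) := by
  have hlog : (fun n : ℕ => log n) =o[atTop] fun n : ℕ => (n : ℝ) ^ ((2 : ℝ) / 3) :=
    (isLittleO_log_rpow_atTop (by norm_num)).comp_tendsto tendsto_natCast_atTop_atTop
  have hrlog : (fun n : ℕ => (r n : ℝ) * log n) =o[atTop] fun n : ℕ => (n : ℝ) :=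
    (hro.mul hlog).congr_right fun n => by
      rw [← Real.rpow_add' (Nat.cast_nonneg _) (by norm_num)]; norm_num
  have hbound : ∀ᶠ n in atTop, pc n (r n) ≤ 4 * (r n * log n / n) := by
    filter_upwards [eventually_pow_three_le hro] with n hn
    exact pc_le (hr n) (by linarith [two_mul_add_two_le_of_pow_three_le (hr n) hn])
  have hnonneg : ∀ᶠ n in atTop, 0 ≤ pc n (r n) := by
    filter_upwards [eventually_pow_three_le hro] with n hn
    exact pc_nonneg (by linarith [two_mul_add_two_le_of_pow_three_le (hr n) hn])
  exact squeeze_zero' hnonneg hbound (by simpa using hrlog.tendsto_div_nhds_zero.const_mul 4)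

end Asymptotics

/-- for `ε ∈ (0, 1)`, `2 ≤ r(n) = o(n^{1/3})` and
`p(n) = (1-ε) p_c(n, r(n))`, the expectation `E[Y_n]` tends to infinity. -/
theorem expect_Ycount_tendsto_atTop (ε : ℝ) (hε : ε ∈ Set.Ioo (0 : ℝ) 1)
    (r : ℕ → ℕ) (hr : ∀ n, 2 ≤ r n)
    (hro : (fun n => (r n : ℝ)) =o[atTop] fun n : ℕ => (n : ℝ) ^ ((1 : ℝ) / 3)) :
    Tendsto
      (fun n => bexpect ((1 - ε) * pc n (r n))
        (fun ω : Sym2 (Finset (Fin n)) → Bool => (Ycount n (r n) ω : ℝ)))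
      atTop atTop := by
  obtain ⟨hε0, hε1⟩ := hε
  have hp : Tendsto (fun n => (1 - ε) * pc n (r n)) atTop (nhds 0) := by
    simpa using (tendsto_pc_zero hr hro).const_mul (1 - ε)
  have hlogn : ∀ᶠ n : ℕ in atTop, 3 * log 2 / ε ≤ log n :=
    (tendsto_log_atTop.comp tendsto_natCast_atTop_atTop).eventually_ge_atTop _
  refine tendsto_atTop_mono' _ ?_
    ((tendsto_rpow_atTop (half_pos hε0)).comp tendsto_natCast_atTop_atTop)
  filter_upwards [eventually_pow_three_le hro, hlogn, hp.eventually (Iic_mem_nhds (half_pos hε0))]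
    with n hcube hlog hpε
  have hrn := two_mul_add_two_le_of_pow_three_le (hr n) hcube
  have hp0 : 0 ≤ (1 - ε) * pc n (r n) :=
    mul_nonneg (by linarith) (pc_nonneg (by omega))
  have hnr : 2 * log 2 ≤ ε * (log n - log (r n)) := by
    rw [div_le_iff₀ hε0] at hlog
    nlinarith [mul_le_mul_of_nonneg_left
      (two_thirds_mul_log_le_log_sub_log_of_pow_three_le (by linarith [hr n]) hcube) hε0.le]
  calc (n : ℝ) ^ (ε / 2)
      ≤ n * (n - 1).choose (r n) * (1 - (1 - ε) * pc n (r n)) ^ (n - 1).choose (r n - 1) :=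
        rpow_le_mul_choose_mul_one_sub_pow (by linarith [hr n]) (by omega) hnr hp0
          (by linarith) hpε
          (by rw [mul_left_comm, choose_pred_mul_pc (by omega)])
    _ ≤ _ := mul_choose_mul_one_sub_pow_le_bexpect_Ycount hp0 (by linarith)
          (hr n) (by omega)
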